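/- arXiv:2312.06894 — 3 statements merged into one kernel-verified Lean document; each statement's English description precedes it below -/
import Mathlib

section
/- Let α, β ∈ ℂ ∖ {−1, −2, −3, …} with Re α + Re β > −1. Then for every φ ∈ L¹(𝕋) and every z ∈ 𝔻, ‖DP_{α,β}[φ](z)‖ ≤ |c_{α,β}| · e^{(π/2)|Im α − Im β|} · 2^{Re α + Re β + 2} · ( |α+1| + |β+1| + |α||z| + |β||z| ) · (1 − |z|²)^{−2} · ‖φ‖₁. -/
open MeasureTheory

noncomputable section

/-- The function `u_{α,β}(z) = (1-|z|²)^{α+β+1} (1-z)^{-(α+1)} (1-conj z)^{-(β+1)}`. -/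
def uab (α β : ℂ) (z : ℂ) : ℂ :=
  (((1 : ℝ) - ‖z‖ ^ 2 : ℝ) : ℂ) ^ (α + β + 1) *
    (1 - z) ^ (-(α + 1)) * (1 - (starRingEnd ℂ) z) ^ (-(β + 1))

/-- The normalizing constant `c_{α,β} = Γ(α+1)Γ(β+1)/Γ(α+β+1)`. -/
def cab (α β : ℂ) : ℂ :=
  Complex.Gamma (α + 1) * Complex.Gamma (β + 1) / Complex.Gamma (α + β + 1)

/-- The `(α,β)`-Poisson integral of `φ`. -/
def Pab (α β : ℂ) (φ : ℂ → ℂ) (z : ℂ) : ℂ :=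
  cab α β * ((1 / (2 * Real.pi) : ℝ) : ℂ) *
    ∫ t in (0 : ℝ)..(2 * Real.pi),
      uab α β (z * Complex.exp (-(Complex.I * t))) * φ (Complex.exp (Complex.I * t))

/-- Wirtinger derivative `∂f = (f_x - i f_y)/2`. -/
def wdz (f : ℂ → ℂ) : ℂ → ℂ := fun z =>
  (fderiv ℝ f z 1 - Complex.I * fderiv ℝ f z Complex.I) / 2

/-- Wirtinger derivative `∂̄f = (f_x + i f_y)/2`. -/
def wdzbar (f : ℂ → ℂ) : ℂ → ℂ := fun z =>
  (fderiv ℝ f z 1 + Complex.I * fderiv ℝ f z Complex.I) / 2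

/-- `‖Df(z)‖ = |∂f(z)| + |∂̄f(z)|`. -/
def normD (f : ℂ → ℂ) (z : ℂ) : ℝ :=
  ‖wdz f z‖ + ‖wdzbar f z‖

/-- `α` is not a negative integer. -/
def notNegInt (α : ℂ) : Prop := ∀ n : ℕ, α ≠ -((n : ℂ) + 1)

end

noncomputable section AuxProof

open Complex ComplexConjugate

/-- real-linear map `v ↦ p*v + q*conj v`. -/
def Lm (p q : ℂ) : ℂ →L[ℝ] ℂ :=
  p • (ContinuousLinearMap.id ℝ ℂ) + q • (conjCLE : ℂ →L[ℝ] ℂ)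

@[simp] lemma Lm_apply (p q v : ℂ) : Lm p q v = p * v + q * conj v := by
  simp [Lm, smul_eq_mul]

lemma Lm_norm_le (p q : ℂ) : ‖Lm p q‖ ≤ ‖p‖ + ‖q‖ := by
  refine ContinuousLinearMap.opNorm_le_bound _ (by positivity) fun v => ?_
  rw [Lm_apply]
  calc ‖p * v + q * conj v‖ ≤ ‖p * v‖ + ‖q * conj v‖ := norm_add_le _ _
  _ = (‖p‖ + ‖q‖) * ‖v‖ := by
      simp [norm_mul]; ring

def Af (w : ℂ) : ℂ := 1 - w * conj w
def Bf (w : ℂ) : ℂ := 1 - w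
def Cf (w : ℂ) : ℂ := 1 - conj w

lemma Af_eq (w : ℂ) : Af w = (((1:ℝ) - ‖w‖ ^ 2 : ℝ) : ℂ) := by
  simp [Af, Complex.mul_conj, ← Complex.sq_norm]

lemma uab_eq (α β : ℂ) : uab α β = fun w => Af w ^ (α + β + 1) *
    Bf w ^ (-(α + 1)) * Cf w ^ (-(β + 1)) := by
  funext w
  rw [uab, Af_eq]
  rfl

variable {w : ℂ}

lemma Ar_pos (hw : ‖w‖ < 1) : (0:ℝ) < 1 - ‖w‖ ^ 2 := by
  nlinarith [norm_nonneg w]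

lemma Af_slit (hw : ‖w‖ < 1) : Af w ∈ slitPlane := by
  rw [Af_eq]
  exact Complex.ofReal_mem_slitPlane.2 (Ar_pos hw)

lemma re_lt (hw : ‖w‖ < 1) : w.re < 1 :=
  lt_of_le_of_lt (le_trans (le_abs_self _) (Complex.abs_re_le_norm w)) hw

lemma Bf_slit (hw : ‖w‖ < 1) : Bf w ∈ slitPlane := by
  refine Complex.mem_slitPlane_iff.2 (Or.inl ?_)
  simp [Bf]
  linarith [re_lt hw]

lemma Cf_slit (hw : ‖w‖ < 1) : Cf w ∈ slitPlane := by
  refine Complex.mem_slitPlane_iff.2 (Or.inl ?_)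
  simp [Cf]
  linarith [re_lt hw]

lemma Af_ne (hw : ‖w‖ < 1) : Af w ≠ 0 := Complex.slitPlane_ne_zero (Af_slit hw)
lemma Bf_ne (hw : ‖w‖ < 1) : Bf w ≠ 0 := Complex.slitPlane_ne_zero (Bf_slit hw)
lemma Cf_ne (hw : ‖w‖ < 1) : Cf w ≠ 0 := Complex.slitPlane_ne_zero (Cf_slit hw)

lemma hasFDerivAt_conj (w : ℂ) : HasFDerivAt (fun z : ℂ => conj z) ((conjCLE : ℂ →L[ℝ] ℂ)) w := by
  exact conjCLE.hasFDerivAt (x := w)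

lemma hasFDerivAt_Af (w : ℂ) : HasFDerivAt Af (Lm (-conj w) (-w)) w := by
  have h := ((hasFDerivAt_id w).mul (hasFDerivAt_conj w)).const_sub 1
  refine h.congr_fderiv ?_
  ext v
  simp [Lm, smul_eq_mul]
  try ring

lemma hasFDerivAt_Bf (w : ℂ) : HasFDerivAt Bf (Lm (-1) 0) w := by
  have h := (hasFDerivAt_id (𝕜 := ℝ) w).const_sub 1
  refine h.congr_fderiv ?_
  ext v
  simp [Lm, smul_eq_mul]

lemma hasFDerivAt_Cf (w : ℂ) : HasFDerivAt Cf (Lm 0 (-1)) w := by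
  have h := (hasFDerivAt_conj w).const_sub 1
  refine h.congr_fderiv ?_
  ext v
  simp [Lm, smul_eq_mul]

lemma HasFDerivAt.cpowLm {g : ℂ → ℂ} {p q w : ℂ} (hg : HasFDerivAt g (Lm p q) w)
    (h : g w ∈ slitPlane) (s : ℂ) :
    HasFDerivAt (fun x => g x ^ s)
      (Lm (s * g w ^ (s - 1) * p) (s * g w ^ (s - 1) * q)) w := by
  have h1 : HasDerivAt (fun z : ℂ => z ^ s) (s * g w ^ (s - 1)) (g w) :=
    (Complex.hasStrictDerivAt_cpow_const h).hasDerivAt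
  have h2 := (h1.hasFDerivAt.restrictScalars ℝ).comp w hg
  refine h2.congr_fderiv ?_
  ext v
  simp [smul_eq_mul]
  ring

def pf (α β : ℂ) (w : ℂ) : ℂ :=
  uab α β w * ((α + 1) * Cf w / (Af w * Bf w) - β * conj w / Af w)

def qf (α β : ℂ) (w : ℂ) : ℂ :=
  uab α β w * ((β + 1) * Bf w / (Af w * Cf w) - α * w / Af w)

lemma hasFDerivAt_uab (α β : ℂ) (hw : ‖w‖ < 1) :
    HasFDerivAt (uab α β) (Lm (pf α β w) (qf α β w)) w := by
  set s := α + β + 1 with hs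
  have hA := (hasFDerivAt_Af w).cpowLm (Af_slit hw) s
  have hB := (hasFDerivAt_Bf w).cpowLm (Bf_slit hw) (-(α+1))
  have hC := (hasFDerivAt_Cf w).cpowLm (Cf_slit hw) (-(β+1))
  have h := (hA.mul hB).mul hC
  rw [uab_eq]
  have hA1 : Af w ^ (s - 1) = Af w ^ s / Af w := by
    rw [Complex.cpow_sub _ _ (Af_ne hw), Complex.cpow_one]
  have hB1 : Bf w ^ (-(α+1) - 1) = Bf w ^ (-(α+1)) / Bf w := by
    rw [Complex.cpow_sub _ _ (Bf_ne hw), Complex.cpow_one]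
  have hC1 : Cf w ^ (-(β+1) - 1) = Cf w ^ (-(β+1)) / Cf w := by
    rw [Complex.cpow_sub _ _ (Cf_ne hw), Complex.cpow_one]
  have hACB : Af w = Cf w + conj w * Bf w := by simp only [Af, Bf, Cf]; ring
  have hABC : Af w = Bf w + w * Cf w := by
    simp only [Af, Bf, Cf]; ring
  have hp : pf α β w =
      Cf w ^ (-(β+1)) * (Af w ^ s * ((α+1) * Bf w ^ (-(α+1) - 1))
        - Bf w ^ (-(α+1)) * (s * Af w ^ (s-1) * conj w)) := by
    rw [pf, uab_eq]
    simp only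
    rw [hA1, hB1]
    set X := Af w ^ s with hX
    set Y := Bf w ^ (-(α+1)) with hY
    set Z := Cf w ^ (-(β+1)) with hZ
    rw [show Cf w = Af w - conj w * Bf w by rw [hACB]; ring, hs]
    field_simp [Af_ne hw, Bf_ne hw]
    ring
  have hq : qf α β w =
      Af w ^ s * Bf w ^ (-(α+1)) * ((β+1) * Cf w ^ (-(β+1) - 1))
        - Cf w ^ (-(β+1)) * (Bf w ^ (-(α+1)) * (s * Af w ^ (s-1) * w)) := by
    rw [qf, uab_eq]
    simp only
    rw [hA1, hC1]
    set X := Af w ^ s with hX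
    set Y := Bf w ^ (-(α+1)) with hY
    set Z := Cf w ^ (-(β+1)) with hZ
    rw [show Bf w = Af w - w * Cf w by rw [hABC]; ring, hs]
    field_simp [Af_ne hw, Cf_ne hw]
    ring
  refine h.congr_fderiv ?_
  ext v
  simp only [Lm_apply, ContinuousLinearMap.add_apply, ContinuousLinearMap.coe_smul',
      Pi.smul_apply, smul_eq_mul, Pi.mul_apply]
  rw [hp, hq]
  ring

lemma abs_Af (hw : ‖w‖ < 1) :
    ‖Af w‖ = 1 - ‖w‖ ^ 2 := by
  rw [Af_eq, Complex.norm_real, Real.norm_eq_abs, _root_.abs_of_pos (Ar_pos hw)]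

lemma Cf_conj (w : ℂ) : Cf w = conj (Bf w) := by simp [Cf, Bf]

lemma abs_Cf (w : ℂ) : ‖Cf w‖ = ‖Bf w‖ := by
  rw [Cf_conj, Complex.norm_conj]

lemma Bf_re_pos (hw : ‖w‖ < 1) : 0 < (Bf w).re := by
  simp only [Bf, Complex.sub_re, Complex.one_re]
  linarith [re_lt hw]

lemma abs_Bf_pos (hw : ‖w‖ < 1) : 0 < ‖Bf w‖ :=
  norm_pos_iff.2 (Bf_ne hw)

lemma arg_Cf (hw : ‖w‖ < 1) : Complex.arg (Cf w) = - Complex.arg (Bf w) := by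
  have hne : Complex.arg (Bf w) ≠ Real.pi := by
    intro h
    have := (Complex.arg_eq_pi_iff.1 h).1
    linarith [Bf_re_pos hw]
  rw [Cf_conj, Complex.arg_conj, if_neg hne]

lemma abs_arg_Bf (hw : ‖w‖ < 1) : |Complex.arg (Bf w)| ≤ Real.pi / 2 :=
  Complex.abs_arg_le_pi_div_two_iff.2 (le_of_lt (Bf_re_pos hw))

lemma Bf_lb (hw : ‖w‖ < 1) :
    (1 - ‖w‖ ^ 2) / 2 ≤ ‖Bf w‖ := by
  have h1 : 1 - ‖w‖ ≤ ‖Bf w‖ := by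
    have := norm_sub_norm_le (1 : ℂ) w
    simpa [Bf] using this
  nlinarith [norm_nonneg w]

lemma abs_uab_le (α β : ℂ) (hw : ‖w‖ < 1) :
    ‖uab α β w‖ ≤
      Real.exp (Real.pi / 2 * |α.im - β.im|) *
        (1 - ‖w‖ ^ 2) ^ ((α + β).re + 1) *
        ‖Bf w‖ ^ (-((α + β).re + 2)) := by
  set Ar := 1 - ‖w‖ ^ 2 with hAr
  set Br := ‖Bf w‖ with hBr
  set g := Complex.arg (Bf w) with hg
  have hArpos : 0 < Ar := Ar_pos hw
  have hBrpos : 0 < Br := abs_Bf_pos hw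
  have h1 : ‖Af w ^ (α + β + 1)‖ = Ar ^ ((α + β).re + 1) := by
    rw [Af_eq, Complex.norm_cpow_eq_rpow_re_of_pos hArpos,
      show (α + β + 1).re = (α + β).re + 1 by simp]
  have h2 : ‖Bf w ^ (-(α + 1))‖ =
      Br ^ (-(α.re + 1)) * Real.exp (g * α.im) := by
    rw [Complex.norm_cpow_of_ne_zero (Bf_ne hw)]
    have e1 : (-(α + 1)).re = -(α.re + 1) := by simp
    have e2 : g * (-(α + 1)).im = -(g * α.im) := by simp
    rw [e1, e2, Real.exp_neg, div_eq_mul_inv, inv_inv]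
  have h3 : ‖Cf w ^ (-(β + 1))‖ =
      Br ^ (-(β.re + 1)) * Real.exp (-(g * β.im)) := by
    rw [Complex.norm_cpow_of_ne_zero (Cf_ne hw), abs_Cf, arg_Cf hw]
    have e1 : (-(β + 1)).re = -(β.re + 1) := by simp
    have e2 : -g * (-(β + 1)).im = g * β.im := by simp
    rw [e1, e2, Real.exp_neg, ← div_eq_mul_inv]
  have hexp : Real.exp (g * α.im) * Real.exp (-(g * β.im)) ≤
      Real.exp (Real.pi / 2 * |α.im - β.im|) := by
    rw [← Real.exp_add]
    apply Real.exp_le_exp.2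
    have : g * α.im + -(g * β.im) = g * (α.im - β.im) := by ring
    rw [this]
    calc g * (α.im - β.im) ≤ |g * (α.im - β.im)| := le_abs_self _
    _ = |g| * |α.im - β.im| := abs_mul _ _
    _ ≤ Real.pi / 2 * |α.im - β.im| :=
        mul_le_mul_of_nonneg_right (abs_arg_Bf hw) (abs_nonneg _)
  have hBsum : Br ^ (-(α.re + 1)) * Br ^ (-(β.re + 1)) = Br ^ (-((α + β).re + 2)) := by
    rw [← Real.rpow_add hBrpos]
    congr 1
    simp [Complex.add_re]
    ring
  rw [uab_eq]
  simp only
  rw [norm_mul, norm_mul, h1, h2, h3]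
  calc Ar ^ ((α + β).re + 1) * (Br ^ (-(α.re + 1)) * Real.exp (g * α.im)) *
        (Br ^ (-(β.re + 1)) * Real.exp (-(g * β.im)))
      = (Real.exp (g * α.im) * Real.exp (-(g * β.im))) *
          Ar ^ ((α + β).re + 1) * (Br ^ (-(α.re + 1)) * Br ^ (-(β.re + 1))) := by ring
    _ = (Real.exp (g * α.im) * Real.exp (-(g * β.im))) *
          Ar ^ ((α + β).re + 1) * Br ^ (-((α + β).re + 2)) := by rw [hBsum]
    _ ≤ Real.exp (Real.pi / 2 * |α.im - β.im|) * Ar ^ ((α + β).re + 1) *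
          Br ^ (-((α + β).re + 2)) := by
        have hpos : (0:ℝ) ≤ Ar ^ ((α + β).re + 1) * Br ^ (-((α + β).re + 2)) := by positivity
        calc _ = (Real.exp (g * α.im) * Real.exp (-(g * β.im))) *
              (Ar ^ ((α + β).re + 1) * Br ^ (-((α + β).re + 2))) := by ring
        _ ≤ Real.exp (Real.pi / 2 * |α.im - β.im|) *
              (Ar ^ ((α + β).re + 1) * Br ^ (-((α + β).re + 2))) :=
            mul_le_mul_of_nonneg_right hexp hpos
        _ = _ := by ring

lemma pf_qf_abs_le (α β : ℂ) (hαβ : -1 < (α + β).re) (hw : ‖w‖ < 1) :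
    ‖pf α β w‖ + ‖qf α β w‖ ≤
      Real.exp (Real.pi / 2 * |α.im - β.im|) * (2:ℝ) ^ ((α + β).re + 2) *
        (‖α + 1‖ + ‖β + 1‖ +
          ‖α‖ * ‖w‖ + ‖β‖ * ‖w‖) *
        (1 - ‖w‖ ^ 2) ^ (-2 : ℝ) := by
  set Ar := 1 - ‖w‖ ^ 2 with hAr
  set Br := ‖Bf w‖ with hBr
  have hArpos : 0 < Ar := Ar_pos hw
  have hBrpos : 0 < Br := abs_Bf_pos hw
  set K := Real.exp (Real.pi / 2 * |α.im - β.im|) with hK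
  set c := (α + β).re with hc
  have hc1 : (-1 : ℝ) < c := hαβ
  -- core estimate : abs u ≤ K * 2^(c+2) * Ar⁻¹
  have hcore : ‖uab α β w‖ ≤ K * (2:ℝ) ^ (c + 2) * Ar⁻¹ := by
    have h1 := abs_uab_le α β hw
    have h2 : Br ^ (-(c + 2)) ≤ (Ar / 2) ^ (-(c + 2)) := by
      apply Real.rpow_le_rpow_of_nonpos (by linarith) (Bf_lb hw)
      linarith
    have h3 : (Ar / 2) ^ (-(c + 2)) = (2:ℝ) ^ (c + 2) * Ar ^ (-(c + 2)) := by
      rw [Real.div_rpow hArpos.le (by norm_num : (0:ℝ) ≤ 2)]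
      rw [Real.rpow_neg hArpos.le, Real.rpow_neg (by norm_num : (0:ℝ) ≤ 2)]
      field_simp
    have h4 : Ar ^ (c + 1) * Ar ^ (-(c + 2)) = Ar⁻¹ := by
      rw [← Real.rpow_add hArpos, show c + 1 + -(c + 2) = -1 by ring, Real.rpow_neg_one]
    calc ‖uab α β w‖ ≤ K * Ar ^ (c + 1) * Br ^ (-(c + 2)) := h1
    _ ≤ K * Ar ^ (c + 1) * ((Ar / 2) ^ (-(c + 2))) := by
        apply mul_le_mul_of_nonneg_left h2
        positivity
    _ = K * (2:ℝ) ^ (c + 2) * (Ar ^ (c + 1) * Ar ^ (-(c + 2))) := by rw [h3]; ring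
    _ = K * (2:ℝ) ^ (c + 2) * Ar⁻¹ := by rw [h4]
  have hp : ‖pf α β w‖ ≤
      ‖uab α β w‖ * ((‖α + 1‖ + ‖β‖ * ‖w‖) * Ar⁻¹) := by
    rw [pf, norm_mul]
    apply mul_le_mul_of_nonneg_left _ (norm_nonneg _)
    have e1 : ‖(α + 1) * Cf w / (Af w * Bf w)‖ = ‖α + 1‖ * Ar⁻¹ := by
      rw [norm_div, norm_mul, norm_mul, abs_Cf, abs_Af hw, ← hBr, ← hAr]
      field_simp
    have e2 : ‖β * conj w / Af w‖ = ‖β‖ * ‖w‖ * Ar⁻¹ := by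
      rw [norm_div, norm_mul, Complex.norm_conj, abs_Af hw, ← hAr, div_eq_mul_inv]
    calc ‖(α + 1) * Cf w / (Af w * Bf w) - β * conj w / Af w‖
        ≤ ‖(α + 1) * Cf w / (Af w * Bf w)‖ + ‖β * conj w / Af w‖ :=
          norm_sub_le _ _
    _ = (‖α + 1‖ + ‖β‖ * ‖w‖) * Ar⁻¹ := by
        rw [e1, e2]; ring
  have hq : ‖qf α β w‖ ≤
      ‖uab α β w‖ * ((‖β + 1‖ + ‖α‖ * ‖w‖) * Ar⁻¹) := by
    rw [qf, norm_mul]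
    apply mul_le_mul_of_nonneg_left _ (norm_nonneg _)
    have e1 : ‖(β + 1) * Bf w / (Af w * Cf w)‖ = ‖β + 1‖ * Ar⁻¹ := by
      rw [norm_div, norm_mul, norm_mul, abs_Cf, abs_Af hw, ← hBr, ← hAr]
      field_simp
    have e2 : ‖α * w / Af w‖ = ‖α‖ * ‖w‖ * Ar⁻¹ := by
      rw [norm_div, norm_mul, abs_Af hw, ← hAr, div_eq_mul_inv]
    calc ‖(β + 1) * Bf w / (Af w * Cf w) - α * w / Af w‖
        ≤ ‖(β + 1) * Bf w / (Af w * Cf w)‖ + ‖α * w / Af w‖ :=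
          norm_sub_le _ _
    _ = (‖β + 1‖ + ‖α‖ * ‖w‖) * Ar⁻¹ := by
        rw [e1, e2]; ring
  have hAr2 : Ar⁻¹ * Ar⁻¹ = Ar ^ (-2 : ℝ) := by
    rw [show (-2:ℝ) = -1 + -1 by norm_num, Real.rpow_add hArpos, Real.rpow_neg_one]
  set coef := ‖α + 1‖ + ‖β + 1‖ +
      ‖α‖ * ‖w‖ + ‖β‖ * ‖w‖ with hcoef
  calc ‖pf α β w‖ + ‖qf α β w‖
      ≤ ‖uab α β w‖ * ((‖α + 1‖ + ‖β‖ * ‖w‖) * Ar⁻¹)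
        + ‖uab α β w‖ * ((‖β + 1‖ + ‖α‖ * ‖w‖) * Ar⁻¹) :=
        add_le_add hp hq
    _ = ‖uab α β w‖ * (coef * Ar⁻¹) := by rw [hcoef]; ring
    _ ≤ (K * (2:ℝ) ^ (c + 2) * Ar⁻¹) * (coef * Ar⁻¹) := by
        apply mul_le_mul_of_nonneg_right hcore
        have : (0:ℝ) ≤ coef := by positivity
        positivity
    _ = K * (2:ℝ) ^ (c + 2) * coef * (Ar⁻¹ * Ar⁻¹) := by ring
    _ = K * (2:ℝ) ^ (c + 2) * coef * Ar ^ (-2:ℝ) := by rw [hAr2]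

lemma abs_exp_neg_I (t : ℝ) : ‖Complex.exp (-(Complex.I * t))‖ = 1 := by
  rw [Complex.norm_exp]
  simp [Complex.mul_re]

lemma conj_exp_neg_I (t : ℝ) :
    conj (Complex.exp (-(Complex.I * t))) = Complex.exp (Complex.I * t) := by
  rw [← Complex.exp_conj]
  congr 1
  simp [Complex.conj_ofReal]

lemma cont_mul_exp (x : ℂ) : Continuous fun t : ℝ => x * Complex.exp (-(Complex.I * t)) := by
  apply continuous_const.mul
  exact Complex.continuous_exp.comp ((continuous_const.mul Complex.continuous_ofReal).neg)

lemma abs_x_exp (x : ℂ) (t : ℝ) :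
    ‖x * Complex.exp (-(Complex.I * t))‖ = ‖x‖ := by
  rw [norm_mul, abs_exp_neg_I, mul_one]

lemma continuousAt_uab (α β : ℂ) (hw : ‖w‖ < 1) : ContinuousAt (uab α β) w :=
  (hasFDerivAt_uab α β hw).continuousAt

lemma continuousAt_pf (α β : ℂ) (hw : ‖w‖ < 1) : ContinuousAt (pf α β) w := by
  have hu := continuousAt_uab α β hw
  have hA := (hasFDerivAt_Af w).continuousAt
  have hB := (hasFDerivAt_Bf w).continuousAt
  have hC := (hasFDerivAt_Cf w).continuousAt
  have hconj := (hasFDerivAt_conj w).continuousAt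
  exact hu.mul (((continuousAt_const.mul hC).div (hA.mul hB)
    (mul_ne_zero (Af_ne hw) (Bf_ne hw))).sub
    ((continuousAt_const.mul hconj).div hA (Af_ne hw)))

lemma continuousAt_qf (α β : ℂ) (hw : ‖w‖ < 1) : ContinuousAt (qf α β) w := by
  have hu := continuousAt_uab α β hw
  have hA := (hasFDerivAt_Af w).continuousAt
  have hB := (hasFDerivAt_Bf w).continuousAt
  have hC := (hasFDerivAt_Cf w).continuousAt
  exact hu.mul (((continuousAt_const.mul hB).div (hA.mul hC)
    (mul_ne_zero (Af_ne hw) (Cf_ne hw))).sub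
    ((continuousAt_const.mul continuousAt_id).div hA (Af_ne hw)))

lemma cont_uab_t (α β : ℂ) {x : ℂ} (hx : ‖x‖ < 1) :
    Continuous fun t : ℝ => uab α β (x * Complex.exp (-(Complex.I * t))) := by
  rw [continuous_iff_continuousAt]
  intro t
  exact (continuousAt_uab α β (by rw [abs_x_exp]; exact hx)).comp (cont_mul_exp x).continuousAt

lemma cont_pf_t (α β : ℂ) {x : ℂ} (hx : ‖x‖ < 1) :
    Continuous fun t : ℝ => pf α β (x * Complex.exp (-(Complex.I * t))) := by
  rw [continuous_iff_continuousAt]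
  intro t
  exact (continuousAt_pf α β (by rw [abs_x_exp]; exact hx)).comp (cont_mul_exp x).continuousAt

lemma cont_qf_t (α β : ℂ) {x : ℂ} (hx : ‖x‖ < 1) :
    Continuous fun t : ℝ => qf α β (x * Complex.exp (-(Complex.I * t))) := by
  rw [continuous_iff_continuousAt]
  intro t
  exact (continuousAt_qf α β (by rw [abs_x_exp]; exact hx)).comp (cont_mul_exp x).continuousAt

lemma hasFDerivAt_F (α β : ℂ) (φ : ℂ → ℂ) (t : ℝ) {x : ℂ} (hx : ‖x‖ < 1) :
    HasFDerivAt
      (fun y => uab α β (y * Complex.exp (-(Complex.I * t))) * φ (Complex.exp (Complex.I * t)))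
      (Lm (Complex.exp (-(Complex.I * t)) * pf α β (x * Complex.exp (-(Complex.I * t))) *
            φ (Complex.exp (Complex.I * t)))
          (Complex.exp (Complex.I * t) * qf α β (x * Complex.exp (-(Complex.I * t))) *
            φ (Complex.exp (Complex.I * t)))) x := by
  set e := Complex.exp (-(Complex.I * t)) with he
  have habs : ‖x * e‖ < 1 := by rw [abs_x_exp]; exact hx
  have hmul : HasFDerivAt (fun y : ℂ => y * e) (Lm e 0) x := by
    have h := (hasFDerivAt_id (𝕜 := ℝ) x).mul_const e
    refine h.congr_fderiv ?_
    ext v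
    simp [Lm, smul_eq_mul]
  have h1 := ((hasFDerivAt_uab α β habs).comp x hmul).mul_const (φ (Complex.exp (Complex.I * t)))
  refine h1.congr_fderiv ?_
  ext v
  simp only [ContinuousLinearMap.coe_smul', Pi.smul_apply, ContinuousLinearMap.coe_comp',
    Function.comp_apply, Lm_apply, smul_eq_mul]
  simp only [zero_mul, add_zero, map_mul, he, conj_exp_neg_I]
  ring

lemma mono_rpow_neg2 {u v : ℝ} (hu : 0 < u) (huv : u ≤ v) : v ^ (-2:ℝ) ≤ u ^ (-2:ℝ) :=
  Real.rpow_le_rpow_of_nonpos hu huv (by norm_num)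

lemma Lm_norm_le' (p q : ℂ) {M : ℝ} (h : ‖p‖ + ‖q‖ ≤ M) : ‖Lm p q‖ ≤ M :=
  le_trans (Lm_norm_le p q) h

end AuxProof

set_option maxHeartbeats 1000000 in
open Complex ComplexConjugate in
theorem stmt9 (α β : ℂ) (hα : notNegInt α) (hβ : notNegInt β)
    (hαβ : -1 < (α + β).re) (φ : ℂ → ℂ)
    (hφ : IntervalIntegrable (fun t : ℝ => φ (Complex.exp (Complex.I * t)))
      volume 0 (2 * Real.pi))
    (z : ℂ) (hz : ‖z‖ < 1) :
    normD (Pab α β φ) z ≤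
      ‖cab α β‖ * Real.exp (Real.pi / 2 * |α.im - β.im|) *
        (2 : ℝ) ^ ((α + β).re + 2) *
        (‖α + 1‖ + ‖β + 1‖ +
          ‖α‖ * ‖z‖ + ‖β‖ * ‖z‖) *
        (1 - ‖z‖ ^ 2) ^ (-2 : ℝ) *
        ((1 / (2 * Real.pi)) *
          ∫ t in (0 : ℝ)..(2 * Real.pi),
            ‖φ (Complex.exp (Complex.I * t))‖) := by
  have hπ : (0:ℝ) < Real.pi := Real.pi_pos
  have h2πpos : (0:ℝ) < 2 * Real.pi := by linarith
  have h2π : (0:ℝ) ≤ 2 * Real.pi := h2πpos.le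
  set K := Real.exp (Real.pi / 2 * |α.im - β.im|) with hK
  have hKpos : 0 < K := Real.exp_pos _
  set c2 := (α + β).re + 2 with hc2
  set F : ℂ → ℝ → ℂ := fun x t =>
    uab α β (x * Complex.exp (-(Complex.I * t))) * φ (Complex.exp (Complex.I * t)) with hFdef
  set af : ℂ → ℝ → ℂ := fun x t =>
    Complex.exp (-(Complex.I * t)) * pf α β (x * Complex.exp (-(Complex.I * t))) *
      φ (Complex.exp (Complex.I * t)) with hafdef
  set bg : ℂ → ℝ → ℂ := fun x t =>
    Complex.exp (Complex.I * t) * qf α β (x * Complex.exp (-(Complex.I * t))) *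
      φ (Complex.exp (Complex.I * t)) with hbgdef
  set F' : ℂ → ℝ → ℂ →L[ℝ] ℂ := fun x t => Lm (af x t) (bg x t) with hF'def
  set c0 : ℂ := cab α β * ((1 / (2 * Real.pi) : ℝ) : ℂ) with hc0
  set r : ℝ := (1 + ‖z‖) / 2 with hr
  have hr1 : r < 1 := by rw [hr]; linarith
  have hzr : ‖z‖ < r := by rw [hr]; linarith
  have hrpos : 0 < r := by rw [hr]; positivity
  set ε : ℝ := (1 - ‖z‖) / 2 with hε
  have hεpos : 0 < ε := by rw [hε]; linarith
  have hball : ∀ x ∈ Metric.ball z ε, ‖x‖ < r := by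
    intro x hx
    have h1 : ‖x - z‖ < ε := by
      simpa [Complex.dist_eq] using Metric.mem_ball.1 hx
    calc ‖x‖ = ‖x - z + z‖ := by ring_nf
    _ ≤ ‖x - z‖ + ‖z‖ := norm_add_le _ _
    _ < ε + ‖z‖ := by linarith
    _ = r := by rw [hε, hr]; ring
  set M : ℝ := K * (2:ℝ) ^ c2 *
      (‖α + 1‖ + ‖β + 1‖ + ‖α‖ + ‖β‖) *
      (1 - r ^ 2) ^ (-2:ℝ) with hM
  have habsexpI : ∀ t : ℝ, ‖Complex.exp (Complex.I * t)‖ = 1 := by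
    intro t
    rw [Complex.norm_exp]
    simp [Complex.mul_re]
  -- pointwise estimate on the ball
  have hptwise : ∀ (t : ℝ) (x : ℂ), ‖x‖ < r →
      ‖af x t‖ + ‖bg x t‖ ≤
        M * ‖φ (Complex.exp (Complex.I * t))‖ := by
    intro t x hxr
    have hx1 : ‖x‖ < 1 := hxr.trans hr1
    have heq : ‖af x t‖ + ‖bg x t‖ =
        (‖pf α β (x * Complex.exp (-(Complex.I * t)))‖ +
          ‖qf α β (x * Complex.exp (-(Complex.I * t)))‖) *
          ‖φ (Complex.exp (Complex.I * t))‖ := by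
      rw [hafdef, hbgdef]
      simp only [norm_mul, abs_exp_neg_I, habsexpI, one_mul]
      ring
    rw [heq]
    have h := pf_qf_abs_le (w := x * Complex.exp (-(Complex.I * t))) α β hαβ
      (by rw [abs_x_exp]; exact hx1)
    rw [abs_x_exp] at h
    have hcore : ‖pf α β (x * Complex.exp (-(Complex.I * t)))‖ +
        ‖qf α β (x * Complex.exp (-(Complex.I * t)))‖ ≤ M := by
      refine le_trans h ?_
      rw [hM, hc2]
      have hx0 : (0:ℝ) ≤ ‖x‖ := norm_nonneg x
      have hx1' : ‖x‖ ≤ 1 := hx1.le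
      have hco : ‖α + 1‖ + ‖β + 1‖ +
          ‖α‖ * ‖x‖ + ‖β‖ * ‖x‖ ≤
          ‖α + 1‖ + ‖β + 1‖ + ‖α‖ + ‖β‖ := by
        nlinarith [norm_nonneg α, norm_nonneg β]
      have hrp : (1 - ‖x‖ ^ 2) ^ (-2:ℝ) ≤ (1 - r ^ 2) ^ (-2:ℝ) := by
        apply mono_rpow_neg2
        · nlinarith
        · nlinarith
      have h1 : (0:ℝ) ≤ K * (2:ℝ) ^ ((α + β).re + 2) :=
        mul_nonneg hKpos.le (by positivity)
      have h2 : (0:ℝ) ≤ ‖α + 1‖ + ‖β + 1‖ +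
          ‖α‖ * ‖x‖ + ‖β‖ * ‖x‖ := by positivity
      have hbase : (0:ℝ) ≤ 1 - ‖x‖ ^ 2 := by nlinarith
      have h3 : (0:ℝ) ≤ (1 - ‖x‖ ^ 2) ^ (-2:ℝ) := Real.rpow_nonneg hbase _
      calc K * (2:ℝ) ^ ((α + β).re + 2) *
            (‖α + 1‖ + ‖β + 1‖ +
              ‖α‖ * ‖x‖ + ‖β‖ * ‖x‖) *
            (1 - ‖x‖ ^ 2) ^ (-2:ℝ)
          ≤ K * (2:ℝ) ^ ((α + β).re + 2) *
            (‖α + 1‖ + ‖β + 1‖ + ‖α‖ + ‖β‖) *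
            (1 - ‖x‖ ^ 2) ^ (-2:ℝ) := by
            apply mul_le_mul_of_nonneg_right _ h3
            apply mul_le_mul_of_nonneg_left hco h1
      _ ≤ K * (2:ℝ) ^ ((α + β).re + 2) *
            (‖α + 1‖ + ‖β + 1‖ + ‖α‖ + ‖β‖) *
            (1 - r ^ 2) ^ (-2:ℝ) := by
            apply mul_le_mul_of_nonneg_left hrp
            exact mul_nonneg h1 (by positivity)

    exact mul_le_mul_of_nonneg_right hcore (norm_nonneg _)
  have hMnorm : ∀ (t : ℝ) (x : ℂ), ‖x‖ < r →
      ‖F' x t‖ ≤ M * ‖φ (Complex.exp (Complex.I * t))‖ := by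
    intro t x hxr
    rw [hF'def]
    exact Lm_norm_le' _ _ (hptwise t x hxr)
  -- measurability of φ ∘ exp
  have hφmeas : AEStronglyMeasurable (fun t : ℝ => φ (Complex.exp (Complex.I * t)))
      (volume.restrict (Set.uIoc 0 (2 * Real.pi))) := by
    rw [Set.uIoc_of_le h2π]
    exact hφ.1.aestronglyMeasurable
  have hcexp : Continuous fun t : ℝ => Complex.exp (-(Complex.I * t)) :=
    Complex.continuous_exp.comp ((continuous_const.mul Complex.continuous_ofReal).neg)
  have hcexpI : Continuous fun t : ℝ => Complex.exp (Complex.I * t) :=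
    Complex.continuous_exp.comp (continuous_const.mul Complex.continuous_ofReal)
  -- integrability of af z, bg z
  have haf_int : IntervalIntegrable (af z) volume 0 (2 * Real.pi) := by
    rw [hafdef]
    exact hφ.continuousOn_mul ((hcexp.mul (cont_pf_t α β hz)).continuousOn)
  have hbg_int : IntervalIntegrable (bg z) volume 0 (2 * Real.pi) := by
    rw [hbgdef]
    exact hφ.continuousOn_mul ((hcexpI.mul (cont_qf_t α β hz)).continuousOn)
  have hbound_int : IntervalIntegrable
      (fun t => M * ‖φ (Complex.exp (Complex.I * t))‖) volume 0 (2 * Real.pi) := by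
    simpa using (hφ.norm.const_mul M)
  -- measurability of F' z
  have hafmeas : AEStronglyMeasurable (af z) (volume.restrict (Set.uIoc 0 (2 * Real.pi))) := by
    rw [hafdef]
    exact ((hcexp.mul (cont_pf_t α β hz)).aestronglyMeasurable).mul hφmeas
  have hbgmeas : AEStronglyMeasurable (bg z) (volume.restrict (Set.uIoc 0 (2 * Real.pi))) := by
    rw [hbgdef]
    exact ((hcexpI.mul (cont_qf_t α β hz)).aestronglyMeasurable).mul hφmeas
  have hF'meas : AEStronglyMeasurable (F' z) (volume.restrict (Set.uIoc 0 (2 * Real.pi))) := by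
    have heq : (F' z) = fun t =>
        af z t • (ContinuousLinearMap.id ℝ ℂ) + bg z t • (conjCLE : ℂ →L[ℝ] ℂ) := rfl
    rw [heq]
    exact (hafmeas.smul aestronglyMeasurable_const).add (hbgmeas.smul aestronglyMeasurable_const)
  -- differentiation under the integral sign
  have key : HasFDerivAt (fun x => ∫ t in (0:ℝ)..(2 * Real.pi), F x t)
      (∫ t in (0:ℝ)..(2 * Real.pi), F' z t) z := by
    apply intervalIntegral.hasFDerivAt_integral_of_dominated_of_fderiv_le
      (bound := fun t => M * ‖φ (Complex.exp (Complex.I * t))‖) (Metric.ball_mem_nhds z hεpos)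
    · filter_upwards [Metric.ball_mem_nhds z hεpos] with x hx
      exact (((cont_uab_t α β ((hball x hx).trans hr1)).aestronglyMeasurable).mul hφmeas)
    · rw [hFdef]
      exact hφ.continuousOn_mul (cont_uab_t α β hz).continuousOn
    · exact hF'meas
    · exact Filter.Eventually.of_forall fun t _ x hx => hMnorm t x (hball x hx)
    · exact hbound_int
    · exact Filter.Eventually.of_forall fun t _ x hx =>
        hasFDerivAt_F α β φ t ((hball x hx).trans hr1)
  have hPabEq : Pab α β φ = fun x => c0 * ∫ t in (0:ℝ)..(2 * Real.pi), F x t := rfl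
  have hPab : HasFDerivAt (Pab α β φ)
      (c0 • (∫ t in (0:ℝ)..(2 * Real.pi), F' z t)) z := by
    rw [hPabEq]
    exact key.const_mul c0
  have hfd : fderiv ℝ (Pab α β φ) z = c0 • (∫ t in (0:ℝ)..(2 * Real.pi), F' z t) :=
    hPab.fderiv
  -- interval integrability of F' z
  have hF'int : IntervalIntegrable (F' z) volume 0 (2 * Real.pi) := by
    rw [intervalIntegrable_iff_integrableOn_Ioc_of_le h2π]
    have hb : IntegrableOn (fun t : ℝ => M * ‖φ (Complex.exp (Complex.I * t))‖)
        (Set.Ioc 0 (2 * Real.pi)) volume :=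
      (intervalIntegrable_iff_integrableOn_Ioc_of_le h2π).1 hbound_int
    have hm : AEStronglyMeasurable (F' z) (volume.restrict (Set.Ioc 0 (2 * Real.pi))) := by
      rwa [Set.uIoc_of_le h2π] at hF'meas
    exact MeasureTheory.Integrable.mono' hb hm
      (Filter.Eventually.of_forall fun t => hMnorm t z hzr)
  -- compute the Wirtinger derivatives
  have hL1 : (∫ t in (0:ℝ)..(2 * Real.pi), F' z t) 1 =
      (∫ t in (0:ℝ)..(2 * Real.pi), af z t) + ∫ t in (0:ℝ)..(2 * Real.pi), bg z t := by
    rw [ContinuousLinearMap.intervalIntegral_apply hF'int 1]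
    rw [show (fun t => F' z t 1) = fun t => af z t + bg z t by
      funext t; rw [hF'def]; simp [Lm_apply]]
    exact intervalIntegral.integral_add haf_int hbg_int
  have hLI : (∫ t in (0:ℝ)..(2 * Real.pi), F' z t) Complex.I =
      Complex.I * (∫ t in (0:ℝ)..(2 * Real.pi), af z t) -
        Complex.I * ∫ t in (0:ℝ)..(2 * Real.pi), bg z t := by
    rw [ContinuousLinearMap.intervalIntegral_apply hF'int Complex.I]
    rw [show (fun t => F' z t Complex.I) =
        fun t => Complex.I * af z t - Complex.I * bg z t by
      funext t; rw [hF'def]; simp [Lm_apply, Complex.conj_I]; ring]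
    rw [intervalIntegral.integral_sub ((haf_int.const_mul _)) ((hbg_int.const_mul _)),
      intervalIntegral.integral_const_mul, intervalIntegral.integral_const_mul]
  have hwdz : wdz (Pab α β φ) z = c0 * ∫ t in (0:ℝ)..(2 * Real.pi), af z t := by
    rw [wdz]
    simp only [hfd, ContinuousLinearMap.smul_apply, smul_eq_mul]
    rw [hL1, hLI]
    set A := ∫ t in (0:ℝ)..(2 * Real.pi), af z t
    set B := ∫ t in (0:ℝ)..(2 * Real.pi), bg z t
    linear_combination (c0 * (B - A) / 2) * Complex.I_mul_I
  have hwdzbar : wdzbar (Pab α β φ) z = c0 * ∫ t in (0:ℝ)..(2 * Real.pi), bg z t := by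
    rw [wdzbar]
    simp only [hfd, ContinuousLinearMap.smul_apply, smul_eq_mul]
    rw [hL1, hLI]
    set A := ∫ t in (0:ℝ)..(2 * Real.pi), af z t
    set B := ∫ t in (0:ℝ)..(2 * Real.pi), bg z t
    linear_combination (c0 * (A - B) / 2) * Complex.I_mul_I
  -- final estimate
  set Mz : ℝ := K * (2:ℝ) ^ c2 *
      (‖α + 1‖ + ‖β + 1‖ +
        ‖α‖ * ‖z‖ + ‖β‖ * ‖z‖) *
      (1 - ‖z‖ ^ 2) ^ (-2:ℝ) with hMz
  have hptz : ∀ t : ℝ, ‖af z t‖ + ‖bg z t‖ ≤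
      Mz * ‖φ (Complex.exp (Complex.I * t))‖ := by
    intro t
    have heq : ‖af z t‖ + ‖bg z t‖ =
        (‖pf α β (z * Complex.exp (-(Complex.I * t)))‖ +
          ‖qf α β (z * Complex.exp (-(Complex.I * t)))‖) *
          ‖φ (Complex.exp (Complex.I * t))‖ := by
      rw [hafdef, hbgdef]
      simp only [norm_mul, abs_exp_neg_I, habsexpI, one_mul]
      ring
    rw [heq]
    have h := pf_qf_abs_le (w := z * Complex.exp (-(Complex.I * t))) α β hαβ
      (by rw [abs_x_exp]; exact hz)
    rw [abs_x_exp] at h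
    exact mul_le_mul_of_nonneg_right h (norm_nonneg _)
  have habs_c0 : ‖c0‖ = ‖cab α β‖ * (1 / (2 * Real.pi)) := by
    rw [hc0, norm_mul, Complex.norm_real, Real.norm_eq_abs, _root_.abs_of_pos (one_div_pos.2 h2πpos)]
  have hint_norm : ∀ {f : ℝ → ℂ}, IntervalIntegrable f volume 0 (2 * Real.pi) →
      ‖∫ t in (0:ℝ)..(2 * Real.pi), f t‖ ≤
        ∫ t in (0:ℝ)..(2 * Real.pi), ‖f t‖ := by
    intro f hf
    simpa using intervalIntegral.norm_integral_le_integral_norm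
      (f := f) (μ := volume) h2π
  rw [normD, hwdz, hwdzbar]
  calc ‖c0 * ∫ t in (0:ℝ)..(2 * Real.pi), af z t‖ +
        ‖c0 * ∫ t in (0:ℝ)..(2 * Real.pi), bg z t‖
      = ‖c0‖ * (‖∫ t in (0:ℝ)..(2 * Real.pi), af z t‖ +
          ‖∫ t in (0:ℝ)..(2 * Real.pi), bg z t‖) := by
        simp only [norm_mul, mul_add]
    _ ≤ ‖c0‖ * ((∫ t in (0:ℝ)..(2 * Real.pi), ‖af z t‖) +
          ∫ t in (0:ℝ)..(2 * Real.pi), ‖bg z t‖) := by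
        apply mul_le_mul_of_nonneg_left _ (norm_nonneg _)
        exact add_le_add (hint_norm haf_int) (hint_norm hbg_int)
    _ = ‖c0‖ * (∫ t in (0:ℝ)..(2 * Real.pi),
          (‖af z t‖ + ‖bg z t‖)) := by
        rw [intervalIntegral.integral_add]
        · simpa using haf_int.norm
        · simpa using hbg_int.norm
    _ ≤ ‖c0‖ * (∫ t in (0:ℝ)..(2 * Real.pi),
          Mz * ‖φ (Complex.exp (Complex.I * t))‖) := by
        apply mul_le_mul_of_nonneg_left _ (norm_nonneg _)
        apply intervalIntegral.integral_mono_on h2π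
        · apply IntervalIntegrable.add
          · simpa using haf_int.norm
          · simpa using hbg_int.norm
        · simpa using (hφ.norm.const_mul Mz)
        · exact fun t _ => hptz t
    _ = ‖c0‖ * Mz *
          ∫ t in (0:ℝ)..(2 * Real.pi), ‖φ (Complex.exp (Complex.I * t))‖ := by
        rw [intervalIntegral.integral_const_mul, hMz]
        ring
    _ = ‖cab α β‖ * K * (2:ℝ) ^ c2 *
          (‖α + 1‖ + ‖β + 1‖ +
            ‖α‖ * ‖z‖ + ‖β‖ * ‖z‖) *
          (1 - ‖z‖ ^ 2) ^ (-2:ℝ) *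
          ((1 / (2 * Real.pi)) *
            ∫ t in (0:ℝ)..(2 * Real.pi), ‖φ (Complex.exp (Complex.I * t))‖) := by
        rw [habs_c0, hMz]; ring
end

section
/- Let α, β ∈ ℂ. Then for every z ∈ 𝔻, the Wirtinger derivatives of u_{α,β} satisfy ∂u_{α,β}(z) = ( −(α+β+1) conj(z)/(1 − |z|²) + (α+1)/(1 − z) ) · u_{α,β}(z) and ∂̄u_{α,β}(z) = ( −(α+β+1) z/(1 − |z|²) + (β+1)/(1 − conj(z)) ) · u_{α,β}(z). -/
open MeasureTheory

set_option maxHeartbeats 1000000 in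
theorem stmt14 (α β : ℂ) (z : ℂ) (hz : ‖z‖ < 1) :
    wdz (uab α β) z =
        (-(α + β + 1) * (starRingEnd ℂ) z / (1 - ((‖z‖ : ℂ)) ^ 2) +
            (α + 1) / (1 - z)) * uab α β z ∧
      wdzbar (uab α β) z =
        (-(α + β + 1) * z / (1 - ((‖z‖ : ℂ)) ^ 2) +
            (β + 1) / (1 - (starRingEnd ℂ) z)) * uab α β z := by
  set γ := α + β + 1 with hγ
  have hrez : |z.re| < 1 := lt_of_le_of_lt (Complex.abs_re_le_norm z) hz
  have hne1 : (1 : ℂ) - z ≠ 0 := by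
    intro h
    rw [sub_eq_zero] at h
    rw [← h] at hz
    simp at hz
  have hne2 : (1 : ℂ) - (starRingEnd ℂ) z ≠ 0 := by
    intro h
    rw [sub_eq_zero] at h
    have := congrArg (fun w : ℂ => ‖w‖) h
    simp at this
    rw [← this] at hz
    simp at hz
  have hgpos : (0:ℝ) < 1 - ‖z‖ ^ 2 := by nlinarith [norm_nonneg z]
  have hsq : ((‖z‖ : ℂ))^2 = z * (starRingEnd ℂ) z := by
    rw [← Complex.ofReal_pow, Complex.sq_norm, Complex.mul_conj]
  have key : ∀ w : ℂ, (((1:ℝ) - ‖w‖ ^ 2 : ℝ) : ℂ) = 1 - w * (starRingEnd ℂ) w := by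
    intro w
    push_cast
    rw [Complex.mul_conj, ← Complex.sq_norm]
    push_cast
    ring
  have hgC : (1 : ℂ) - z * (starRingEnd ℂ) z = (((1:ℝ) - ‖z‖ ^ 2 : ℝ) : ℂ) := (key z).symm
  have hneg : (1 : ℂ) - z * (starRingEnd ℂ) z ≠ 0 := by
    rw [hgC]
    exact_mod_cast ne_of_gt hgpos
  have hslitg : (1 : ℂ) - z * (starRingEnd ℂ) z ∈ Complex.slitPlane := by
    rw [hgC, Complex.mem_slitPlane_iff]
    left
    rw [Complex.ofReal_re]
    exact hgpos
  have hslit1 : (1 : ℂ) - z ∈ Complex.slitPlane := by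
    rw [Complex.mem_slitPlane_iff]
    left
    simp only [Complex.sub_re, Complex.one_re]
    cases abs_lt.mp hrez; linarith
  have hslit2 : (1 : ℂ) - (starRingEnd ℂ) z ∈ Complex.slitPlane := by
    rw [Complex.mem_slitPlane_iff]
    left
    simp only [Complex.sub_re, Complex.one_re, Complex.conj_re]
    cases abs_lt.mp hrez; linarith
  -- conj derivative
  have hconj : HasFDerivAt (fun w : ℂ => (starRingEnd ℂ) w)
      (Complex.conjCLE.toContinuousLinearMap) z := by
    exact Complex.conjCLE.toContinuousLinearMap.hasFDerivAt (x := z)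
  have hF : HasFDerivAt (fun w : ℂ => 1 - w * (starRingEnd ℂ) w)
      (-(z • Complex.conjCLE.toContinuousLinearMap +
        ((starRingEnd ℂ) z) • ContinuousLinearMap.id ℝ ℂ)) z :=
    ((hasFDerivAt_id z).mul hconj).const_sub 1
  have hA := (((Complex.hasStrictDerivAt_cpow_const (c := γ)
      hslitg).hasDerivAt.hasFDerivAt).restrictScalars ℝ).comp z hF
  have hB := ((((hasDerivAt_id z).const_sub 1).cpow_const
      (c := -(α+1)) hslit1).hasFDerivAt).restrictScalars ℝ
  have hC0 := ((((hasDerivAt_id ((starRingEnd ℂ) z)).const_sub 1).cpow_const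
      (c := -(β+1)) hslit2).hasFDerivAt).restrictScalars ℝ
  have hC := hC0.comp z hconj
  have huab0 := (hA.mul hB).mul hC
  have hfun : uab α β = fun w : ℂ =>
      (1 - w * (starRingEnd ℂ) w) ^ γ * (1 - w) ^ (-(α+1)) *
        (1 - (starRingEnd ℂ) w) ^ (-(β+1)) := by
    funext w
    rw [uab, key w]
  rw [hfun]
  have huab : HasFDerivAt (fun w : ℂ =>
      (1 - w * (starRingEnd ℂ) w) ^ γ * (1 - w) ^ (-(α+1)) *
        (1 - (starRingEnd ℂ) w) ^ (-(β+1))) _ z := huab0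
  have hD := huab.fderiv
  have E1 : ((1:ℂ) - z * (starRingEnd ℂ) z) ^ (γ - 1)
      = ((1:ℂ) - z * (starRingEnd ℂ) z) ^ γ / ((1:ℂ) - z * (starRingEnd ℂ) z) := by
    rw [Complex.cpow_sub _ _ hneg, Complex.cpow_one]
  have E2 : ((1:ℂ) - z) ^ (-(α+1) - 1) = ((1:ℂ) - z) ^ (-(α+1)) / ((1:ℂ) - z) := by
    rw [Complex.cpow_sub _ _ hne1, Complex.cpow_one]
  have E3 : ((1:ℂ) - (starRingEnd ℂ) z) ^ (-(β+1) - 1)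
      = ((1:ℂ) - (starRingEnd ℂ) z) ^ (-(β+1)) / ((1:ℂ) - (starRingEnd ℂ) z) := by
    rw [Complex.cpow_sub _ _ hne2, Complex.cpow_one]
  constructor
  · rw [wdz, hD]
    simp only [ContinuousLinearMap.add_apply, ContinuousLinearMap.smul_apply,
      ContinuousLinearMap.coe_comp', Function.comp_apply,
      ContinuousLinearMap.coe_restrictScalars', ContinuousLinearMap.smulRight_apply,
      ContinuousLinearMap.one_apply, ContinuousLinearMap.neg_apply,
      ContinuousLinearMap.coe_id', id_eq, ContinuousLinearEquiv.coe_coe,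
      Complex.conjCLE_apply, smul_eq_mul, map_one, Complex.conj_I, map_one,
      ContinuousLinearMap.toSpanSingleton_apply, Pi.mul_apply]
    rw [E1, E2, E3, hsq]
    field_simp
    ring_nf
    simp only [Complex.I_sq]
    ring_nf
  · rw [wdzbar, hD]
    simp only [ContinuousLinearMap.add_apply, ContinuousLinearMap.smul_apply,
      ContinuousLinearMap.coe_comp', Function.comp_apply,
      ContinuousLinearMap.coe_restrictScalars', ContinuousLinearMap.smulRight_apply,
      ContinuousLinearMap.one_apply, ContinuousLinearMap.neg_apply,
      ContinuousLinearMap.coe_id', id_eq, ContinuousLinearEquiv.coe_coe,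
      Complex.conjCLE_apply, smul_eq_mul, map_one, Complex.conj_I, map_one,
      ContinuousLinearMap.toSpanSingleton_apply, Pi.mul_apply]
    rw [E1, E2, E3, hsq]
    field_simp
    ring_nf
    simp only [Complex.I_sq]
    ring_nf
end

section
/- Let α, β ∈ ℂ and let k, l ≥ 0 be integers. Then there exists a constant C > 0, depending only on α, β, k, l, such that for every z ∈ 𝔻, |∂^k ∂̄^l u_{α,β}(z)| ≤ C · |u_{α,β}(z)| / (1 − |z|²)^{k+l}. -/
open MeasureTheory

namespace WAux

noncomputable section

def HasW (f : ℂ → ℂ) (p q z : ℂ) : Prop :=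
  ∃ L : ℂ →L[ℝ] ℂ, HasFDerivAt f L z ∧ L 1 = p + q ∧ L Complex.I = (p - q) * Complex.I

theorem HasW.wdz_eq {f : ℂ → ℂ} {p q z : ℂ} (h : HasW f p q z) : wdz f z = p := by
  obtain ⟨L, hL, h1, hI⟩ := h
  simp only [wdz, hL.fderiv, h1, hI]
  linear_combination (-(p - q)/2) * Complex.I_mul_I

theorem HasW.wdzbar_eq {f : ℂ → ℂ} {p q z : ℂ} (h : HasW f p q z) : wdzbar f z = q := by
  obtain ⟨L, hL, h1, hI⟩ := h
  simp only [wdzbar, hL.fderiv, h1, hI]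
  linear_combination ((p - q)/2) * Complex.I_mul_I

theorem HasW.congr {f g : ℂ → ℂ} {p q z : ℂ} (h : HasW g p q z)
    (hfg : f =ᶠ[nhds z] g) : HasW f p q z := by
  obtain ⟨L, hL, h1, hI⟩ := h
  exact ⟨L, hL.congr_of_eventuallyEq hfg, h1, hI⟩

theorem HasW.congr_pq {f : ℂ → ℂ} {p q p' q' z : ℂ} (h : HasW f p q z)
    (hp : p = p') (hq : q = q') : HasW f p' q' z := hp ▸ hq ▸ h

theorem hasW_const (c : ℂ) {z : ℂ} : HasW (fun _ => c) 0 0 z :=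
  ⟨0, hasFDerivAt_const c z, by simp, by simp⟩

theorem hasW_id {z : ℂ} : HasW (fun w => w) 1 0 z :=
  ⟨ContinuousLinearMap.id ℝ ℂ, hasFDerivAt_id z, by simp, by simp⟩

theorem hasW_conj {z : ℂ} : HasW (fun w => (starRingEnd ℂ) w) 0 1 z := by
  refine ⟨Complex.conjCLE.toContinuousLinearMap, ?_, by simp, by simp [Complex.conj_I]⟩
  exact Complex.conjCLE.toContinuousLinearMap.hasFDerivAt.congr_of_eventuallyEq
    (Filter.Eventually.of_forall fun w => by simp)

theorem HasW.add {f g : ℂ → ℂ} {pf qf pg qg z : ℂ} (hf : HasW f pf qf z)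
    (hg : HasW g pg qg z) : HasW (fun w => f w + g w) (pf + pg) (qf + qg) z := by
  obtain ⟨Lf, hLf, hf1, hfI⟩ := hf
  obtain ⟨Lg, hLg, hg1, hgI⟩ := hg
  exact ⟨Lf + Lg, hLf.add hLg, by simp [hf1, hg1]; ring, by simp [hfI, hgI]; ring⟩

theorem HasW.sub {f g : ℂ → ℂ} {pf qf pg qg z : ℂ} (hf : HasW f pf qf z)
    (hg : HasW g pg qg z) : HasW (fun w => f w - g w) (pf - pg) (qf - qg) z := by
  obtain ⟨Lf, hLf, hf1, hfI⟩ := hf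
  obtain ⟨Lg, hLg, hg1, hgI⟩ := hg
  exact ⟨Lf - Lg, hLf.sub hLg, by simp [hf1, hg1]; ring, by simp [hfI, hgI]; ring⟩

theorem HasW.mul {f g : ℂ → ℂ} {pf qf pg qg z : ℂ} (hf : HasW f pf qf z)
    (hg : HasW g pg qg z) :
    HasW (fun w => f w * g w) (f z * pg + g z * pf) (f z * qg + g z * qf) z := by
  obtain ⟨Lf, hLf, hf1, hfI⟩ := hf
  obtain ⟨Lg, hLg, hg1, hgI⟩ := hg
  refine ⟨_, hLf.mul hLg, ?_, ?_⟩ <;>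
    simp [hf1, hg1, hfI, hgI, smul_eq_mul] <;> ring

theorem HasW.comp_deriv {g : ℂ → ℂ} {g' : ℂ} {f : ℂ → ℂ} {p q z : ℂ}
    (hg : HasDerivAt g g' (f z)) (hf : HasW f p q z) :
    HasW (fun w => g (f w)) (g' * p) (g' * q) z := by
  obtain ⟨L, hL, h1, hI⟩ := hf
  refine ⟨_, (hg.hasFDerivAt.restrictScalars ℝ).comp z hL, ?_, ?_⟩ <;>
    simp [h1, hI, smul_eq_mul] <;> ring

theorem pow_aux (m : ℕ) (x y : ℂ) :
    ((m : ℂ) + 1) * x ^ m * y = x ^ m * y + x * ((m : ℂ) * x ^ (m - 1) * y) := by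
  cases m with
  | zero => simp
  | succ k => rw [Nat.add_sub_cancel]; push_cast; ring

theorem HasW.pow {f : ℂ → ℂ} {p q z : ℂ} (n : ℕ) (hf : HasW f p q z) :
    HasW (fun w => f w ^ n) ((n : ℂ) * f z ^ (n - 1) * p) ((n : ℂ) * f z ^ (n - 1) * q) z := by
  induction n with
  | zero => simpa using (hasW_const 1 (z := z))
  | succ m ih =>
    have h := ih.mul hf
    have hfun : (fun w => f w ^ (m + 1)) = fun w => f w ^ m * f w :=
      funext fun w => pow_succ _ _
    rw [hfun]
    refine h.congr_pq ?_ ?_ <;>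
      · push_cast
        rw [pow_aux]

theorem habs_eq (w : ℂ) :
    (((1 : ℝ) - ‖w‖ ^ 2 : ℝ) : ℂ) = 1 - w * (starRingEnd ℂ) w := by
  rw [Complex.mul_conj, Complex.normSq_eq_norm_sq]
  push_cast
  ring

theorem sPos {z : ℂ} (hz : ‖z‖ < 1) : 0 < 1 - ‖z‖ ^ 2 := by
  nlinarith [norm_nonneg z]

theorem hS_slit {z : ℂ} (hz : ‖z‖ < 1) :
    (1 - z * (starRingEnd ℂ) z) ∈ Complex.slitPlane := by
  rw [← habs_eq]; exact Complex.ofReal_mem_slitPlane.mpr (sPos hz)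

theorem hS_ne {z : ℂ} (hz : ‖z‖ < 1) : (1 - z * (starRingEnd ℂ) z) ≠ 0 :=
  Complex.slitPlane_ne_zero (hS_slit hz)

theorem re_lt {z : ℂ} (hz : ‖z‖ < 1) : z.re < 1 :=
  (abs_lt.mp (lt_of_le_of_lt (Complex.abs_re_le_norm z) hz)).2

theorem h1z_slit {z : ℂ} (hz : ‖z‖ < 1) : (1 - z) ∈ Complex.slitPlane := by
  refine Complex.mem_slitPlane_iff.mpr (Or.inl ?_)
  simp only [Complex.sub_re, Complex.one_re]
  linarith [re_lt hz]

theorem h1z_ne {z : ℂ} (hz : ‖z‖ < 1) : (1 - z) ≠ 0 :=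
  Complex.slitPlane_ne_zero (h1z_slit hz)

theorem h1zb_slit {z : ℂ} (hz : ‖z‖ < 1) :
    (1 - (starRingEnd ℂ) z) ∈ Complex.slitPlane := by
  refine Complex.mem_slitPlane_iff.mpr (Or.inl ?_)
  simp only [Complex.sub_re, Complex.one_re, Complex.conj_re]
  linarith [re_lt hz]

theorem h1zb_ne {z : ℂ} (hz : ‖z‖ < 1) : (1 - (starRingEnd ℂ) z) ≠ 0 :=
  Complex.slitPlane_ne_zero (h1zb_slit hz)

theorem hasW_one_sub {z : ℂ} : HasW (fun w => 1 - w) (-1) 0 z :=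
  ((hasW_const 1).sub hasW_id).congr_pq (by ring) (by ring)

theorem hasW_one_sub_conj {z : ℂ} : HasW (fun w => 1 - (starRingEnd ℂ) w) 0 (-1) z :=
  ((hasW_const 1).sub hasW_conj).congr_pq (by ring) (by ring)

theorem hasW_S {z : ℂ} :
    HasW (fun w => 1 - w * (starRingEnd ℂ) w) (-((starRingEnd ℂ) z)) (-z) z :=
  ((hasW_const 1).sub (hasW_id.mul hasW_conj)).congr_pq (by ring) (by ring)

theorem hasW_X {z : ℂ} (hz : ‖z‖ < 1) :
    HasW (fun w => (1 - w)⁻¹) (((1 - z)⁻¹) ^ 2) 0 z := by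
  refine (HasW.comp_deriv (hasDerivAt_inv (h1z_ne hz)) hasW_one_sub).congr_pq ?_ ?_
  · rw [inv_pow]; ring
  · ring

theorem hasW_Y {z : ℂ} (hz : ‖z‖ < 1) :
    HasW (fun w => (1 - (starRingEnd ℂ) w)⁻¹) 0 (((1 - (starRingEnd ℂ) z)⁻¹) ^ 2) z := by
  refine (HasW.comp_deriv (f := fun w => 1 - (starRingEnd ℂ) w) (hasDerivAt_inv (h1zb_ne hz)) hasW_one_sub_conj).congr_pq ?_ ?_
  · ring
  · rw [inv_pow]; ring

theorem hasW_W {z : ℂ} (hz : ‖z‖ < 1) :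
    HasW (fun w => (1 - w * (starRingEnd ℂ) w)⁻¹)
      ((starRingEnd ℂ) z * ((1 - z * (starRingEnd ℂ) z)⁻¹) ^ 2)
      (z * ((1 - z * (starRingEnd ℂ) z)⁻¹) ^ 2) z := by
  refine (HasW.comp_deriv (f := fun w => 1 - w * (starRingEnd ℂ) w) (hasDerivAt_inv (hS_ne hz)) hasW_S).congr_pq ?_ ?_ <;>
    · rw [inv_pow]; ring

theorem hasW_uab (α β : ℂ) {z : ℂ} (hz : ‖z‖ < 1) :
    HasW (uab α β)
      (uab α β z * ((α + β + 1) * (-((starRingEnd ℂ) z)) * (1 - z * (starRingEnd ℂ) z)⁻¹ +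
        (α + 1) * (1 - z)⁻¹))
      (uab α β z * ((α + β + 1) * (-z) * (1 - z * (starRingEnd ℂ) z)⁻¹ +
        (β + 1) * (1 - (starRingEnd ℂ) z)⁻¹)) z := by
  have hueq : uab α β = fun w =>
      (1 - w * (starRingEnd ℂ) w) ^ (α + β + 1) * (1 - w) ^ (-(α + 1)) *
        (1 - (starRingEnd ℂ) w) ^ (-(β + 1)) := by
    funext w; rw [uab, habs_eq]
  rw [hueq]
  have hcp1 := HasW.comp_deriv (f := fun w => 1 - w * (starRingEnd ℂ) w)
    (Complex.hasStrictDerivAt_cpow_const (c := α + β + 1) (hS_slit hz)).hasDerivAt hasW_S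
  have hcp2 := HasW.comp_deriv (f := fun w => 1 - w)
    (Complex.hasStrictDerivAt_cpow_const (c := -(α + 1)) (h1z_slit hz)).hasDerivAt hasW_one_sub
  have hcp3 := HasW.comp_deriv (f := fun w => 1 - (starRingEnd ℂ) w)
    (Complex.hasStrictDerivAt_cpow_const (c := -(β + 1)) (h1zb_slit hz)).hasDerivAt
    hasW_one_sub_conj
  have e1 : (1 - z * (starRingEnd ℂ) z) ^ (α + β + 1 - 1) =
      (1 - z * (starRingEnd ℂ) z) ^ (α + β + 1) * (1 - z * (starRingEnd ℂ) z)⁻¹ := by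
    rw [Complex.cpow_sub _ _ (hS_ne hz), Complex.cpow_one, div_eq_mul_inv]
  have e2 : (1 - z) ^ (-(α + 1) - 1) = (1 - z) ^ (-(α + 1)) * (1 - z)⁻¹ := by
    rw [Complex.cpow_sub _ _ (h1z_ne hz), Complex.cpow_one, div_eq_mul_inv]
  have e3 : (1 - (starRingEnd ℂ) z) ^ (-(β + 1) - 1) =
      (1 - (starRingEnd ℂ) z) ^ (-(β + 1)) * (1 - (starRingEnd ℂ) z)⁻¹ := by
    rw [Complex.cpow_sub _ _ (h1zb_ne hz), Complex.cpow_one, div_eq_mul_inv]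
  refine ((hcp1.mul hcp2).mul hcp3).congr_pq ?_ ?_ <;>
    · beta_reduce
      simp only [e1, e2, e3]
      ring

structure Term where
  c : ℂ
  a : ℕ
  b : ℕ
  p : ℕ
  q : ℕ
  r : ℕ

def mono (t : Term) (z : ℂ) : ℂ :=
  z ^ t.a * ((starRingEnd ℂ) z) ^ t.b * ((1 - z)⁻¹) ^ t.p *
    ((1 - (starRingEnd ℂ) z)⁻¹) ^ t.q * ((1 - z * (starRingEnd ℂ) z)⁻¹) ^ t.r

def evalL (α β : ℂ) (L : List Term) (z : ℂ) : ℂ :=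
  (L.map fun t => t.c * uab α β z * mono t z).sum

def stepZ (α β : ℂ) (t : Term) : List Term :=
  [⟨-(α + β + 1) * t.c, t.a, t.b + 1, t.p, t.q, t.r + 1⟩,
   ⟨(α + 1) * t.c, t.a, t.b, t.p + 1, t.q, t.r⟩,
   ⟨(t.a : ℂ) * t.c, t.a - 1, t.b, t.p, t.q, t.r⟩,
   ⟨(t.p : ℂ) * t.c, t.a, t.b, t.p + 1, t.q, t.r⟩,
   ⟨(t.r : ℂ) * t.c, t.a, t.b + 1, t.p, t.q, t.r + 1⟩]

def stepZbar (α β : ℂ) (t : Term) : List Term :=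
  [⟨-(α + β + 1) * t.c, t.a + 1, t.b, t.p, t.q, t.r + 1⟩,
   ⟨(β + 1) * t.c, t.a, t.b, t.p, t.q + 1, t.r⟩,
   ⟨(t.b : ℂ) * t.c, t.a, t.b - 1, t.p, t.q, t.r⟩,
   ⟨(t.q : ℂ) * t.c, t.a, t.b, t.p, t.q + 1, t.r⟩,
   ⟨(t.r : ℂ) * t.c, t.a + 1, t.b, t.p, t.q, t.r + 1⟩]

theorem hasW_term (α β : ℂ) {z : ℂ} (hz : ‖z‖ < 1) (t : Term) :
    HasW (fun w => t.c * uab α β w * mono t w)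
      (evalL α β (stepZ α β t) z) (evalL α β (stepZbar α β t) z) z := by
  obtain ⟨c, a, b, p, q, r⟩ := t
  have hm := ((((hasW_id.pow a).mul (hasW_conj.pow b)).mul ((hasW_X hz).pow p)).mul
    ((hasW_Y hz).pow q)).mul ((hasW_W hz).pow r)
  have ht := ((hasW_const c).mul (hasW_uab α β hz)).mul hm
  refine ht.congr_pq ?_ ?_
  · beta_reduce
    simp only [evalL, stepZ, mono, List.map_cons, List.map_nil, List.sum_cons, List.sum_nil]
    rcases p with _ | p <;> rcases r with _ | r <;>
      · push_cast
        try simp only [Nat.add_sub_cancel, Nat.succ_sub_one]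
        ring
  · beta_reduce
    simp only [evalL, stepZbar, mono, List.map_cons, List.map_nil, List.sum_cons, List.sum_nil]
    rcases q with _ | q <;> rcases r with _ | r <;>
      · push_cast
        try simp only [Nat.add_sub_cancel, Nat.succ_sub_one]
        ring

theorem evalL_append (α β : ℂ) (L1 L2 : List Term) (z : ℂ) :
    evalL α β (L1 ++ L2) z = evalL α β L1 z + evalL α β L2 z := by
  simp [evalL]

theorem hasW_evalL (α β : ℂ) {z : ℂ} (hz : ‖z‖ < 1) (L : List Term) :
    HasW (evalL α β L) (evalL α β (L.flatMap (stepZ α β)) z)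
      (evalL α β (L.flatMap (stepZbar α β)) z) z := by
  induction L with
  | nil => refine (hasW_const 0).congr_pq ?_ ?_ <;> simp [evalL]
  | cons t L ih =>
    have h := (hasW_term α β hz t).add ih
    refine h.congr_pq ?_ ?_ <;>
      simp [List.flatMap_cons, evalL_append]

def Inv (α β : ℂ) (n : ℕ) (f : ℂ → ℂ) : Prop :=
  ∃ L : List Term, (∀ t ∈ L, t.p + t.q + t.r ≤ n) ∧
    ∀ z : ℂ, ‖z‖ < 1 → f z = evalL α β L z

theorem inv_eventuallyEq {α β : ℂ} {f : ℂ → ℂ} {L : List Term}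
    (he : ∀ z : ℂ, ‖z‖ < 1 → f z = evalL α β L z) {z : ℂ}
    (hz : ‖z‖ < 1) : f =ᶠ[nhds z] evalL α β L :=
  Filter.eventuallyEq_of_mem
    ((isOpen_lt continuous_norm continuous_const).mem_nhds hz)
    fun w hw => he w hw

theorem Inv.stepZ' {α β : ℂ} {n : ℕ} {f : ℂ → ℂ} (h : Inv α β n f) :
    Inv α β (n + 1) (wdz f) := by
  obtain ⟨L, hw, he⟩ := h
  refine ⟨L.flatMap (stepZ α β), ?_, ?_⟩
  · intro t' ht'
    rw [List.mem_flatMap] at ht'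
    obtain ⟨t, htL, ht'⟩ := ht'
    have hwt := hw t htL
    simp only [stepZ, List.mem_cons, List.not_mem_nil, or_false] at ht'
    rcases ht' with h | h | h | h | h <;> subst h <;> simp <;> omega
  · intro z hz
    exact ((hasW_evalL α β hz L).congr (inv_eventuallyEq he hz)).wdz_eq

theorem Inv.stepZbar' {α β : ℂ} {n : ℕ} {f : ℂ → ℂ} (h : Inv α β n f) :
    Inv α β (n + 1) (wdzbar f) := by
  obtain ⟨L, hw, he⟩ := h
  refine ⟨L.flatMap (stepZbar α β), ?_, ?_⟩
  · intro t' ht'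
    rw [List.mem_flatMap] at ht'
    obtain ⟨t, htL, ht'⟩ := ht'
    have hwt := hw t htL
    simp only [stepZbar, List.mem_cons, List.not_mem_nil, or_false] at ht'
    rcases ht' with h | h | h | h | h <;> subst h <;> simp <;> omega
  · intro z hz
    exact ((hasW_evalL α β hz L).congr (inv_eventuallyEq he hz)).wdzbar_eq

theorem inv_uab (α β : ℂ) : Inv α β 0 (uab α β) := by
  refine ⟨[⟨1, 0, 0, 0, 0, 0⟩], by simp, ?_⟩
  intro z hz
  simp [evalL, mono]

theorem inv_iter (α β : ℂ) (k l : ℕ) :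
    Inv α β (k + l) (wdz^[k] (wdzbar^[l] (uab α β))) := by
  have hl : ∀ l : ℕ, Inv α β l (wdzbar^[l] (uab α β)) := by
    intro l
    induction l with
    | zero => simpa using inv_uab α β
    | succ m ih =>
      rw [Function.iterate_succ_apply']
      exact ih.stepZbar'
  induction k with
  | zero => simpa using hl l
  | succ m ih =>
    rw [Function.iterate_succ_apply']
    have := ih.stepZ'
    simpa [Nat.add_right_comm] using this

theorem abs_inv_one_sub_le {z : ℂ} (hz : ‖z‖ < 1) :
    ‖(1 - z)⁻¹‖ ≤ 2 / (1 - ‖z‖ ^ 2) := by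
  have hs0 : 0 < 1 - ‖z‖ ^ 2 := sPos hz
  have h2 : 1 - ‖z‖ ≤ ‖1 - z‖ := by
    have := norm_sub_norm_le (1 : ℂ) z
    simpa using this
  have h1 : (1 - ‖z‖ ^ 2) / 2 ≤ ‖1 - z‖ := by
    nlinarith [norm_nonneg z]
  have hpos : 0 < ‖1 - z‖ := lt_of_lt_of_le (by positivity) h1
  rw [norm_inv, inv_le_comm₀ hpos (by positivity), inv_div]
  exact h1

theorem abs_inv_one_sub_conj_le {z : ℂ} (hz : ‖z‖ < 1) :
    ‖(1 - (starRingEnd ℂ) z)⁻¹‖ ≤ 2 / (1 - ‖z‖ ^ 2) := by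
  have h := abs_inv_one_sub_le (z := (starRingEnd ℂ) z) (by simpa using hz)
  simpa using h

theorem abs_inv_S {z : ℂ} (hz : ‖z‖ < 1) :
    ‖(1 - z * (starRingEnd ℂ) z)⁻¹‖ = (1 - ‖z‖ ^ 2)⁻¹ := by
  rw [← habs_eq, norm_inv, Complex.norm_real, Real.norm_eq_abs, abs_of_pos (sPos hz)]

theorem mono_bound (t : Term) {z : ℂ} (hz : ‖z‖ < 1) {n : ℕ}
    (hn : t.p + t.q + t.r ≤ n) :
    ‖mono t z‖ ≤ 2 ^ (t.p + t.q) / (1 - ‖z‖ ^ 2) ^ n := by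
  set s := 1 - ‖z‖ ^ 2 with hs
  have hs0 : 0 < s := sPos hz
  have hs1 : s ≤ 1 := by
    have := sq_nonneg (‖z‖)
    simp only [hs]
    nlinarith
  have hz1 : ‖z‖ ≤ 1 := hz.le
  calc ‖mono t z‖
      = ‖z‖ ^ t.a * ‖z‖ ^ t.b * ‖(1 - z)⁻¹‖ ^ t.p *
        ‖(1 - (starRingEnd ℂ) z)⁻¹‖ ^ t.q *
        ‖(1 - z * (starRingEnd ℂ) z)⁻¹‖ ^ t.r := by
          simp [mono, norm_mul, norm_pow]
    _ ≤ 1 ^ t.a * 1 ^ t.b * (2 / s) ^ t.p * (2 / s) ^ t.q * (s⁻¹) ^ t.r := by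
          have b1 : ‖z‖ ^ t.a ≤ 1 ^ t.a :=
            pow_le_pow_left₀ (norm_nonneg z) hz1 _
          have b2 : ‖z‖ ^ t.b ≤ 1 ^ t.b :=
            pow_le_pow_left₀ (norm_nonneg z) hz1 _
          have b3 : ‖(1 - z)⁻¹‖ ^ t.p ≤ (2 / s) ^ t.p :=
            pow_le_pow_left₀ (norm_nonneg _) (abs_inv_one_sub_le hz) _
          have b4 : ‖(1 - (starRingEnd ℂ) z)⁻¹‖ ^ t.q ≤ (2 / s) ^ t.q :=
            pow_le_pow_left₀ (norm_nonneg _) (abs_inv_one_sub_conj_le hz) _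
          have b5 : ‖(1 - z * (starRingEnd ℂ) z)⁻¹‖ ^ t.r ≤ (s⁻¹) ^ t.r :=
            le_of_eq (by rw [abs_inv_S hz])
          exact mul_le_mul (mul_le_mul (mul_le_mul (mul_le_mul b1 b2
            (by positivity) (by positivity)) b3 (by positivity) (by positivity)) b4
            (by positivity) (by positivity)) b5 (by positivity) (by positivity)
    _ = 2 ^ (t.p + t.q) / s ^ (t.p + t.q + t.r) := by
          rw [one_pow, one_pow, one_mul, one_mul, div_pow, div_pow, inv_pow]
          rw [pow_add, pow_add, pow_add]
          field_simp
    _ ≤ 2 ^ (t.p + t.q) / s ^ n := by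
          gcongr 2 ^ (t.p + t.q) / ?_
          · exact pow_le_pow_of_le_one hs0.le hs1 hn

theorem evalL_bound (α β : ℂ) (L : List Term) {z : ℂ} (hz : ‖z‖ < 1) {n : ℕ}
    (hw : ∀ t ∈ L, t.p + t.q + t.r ≤ n) :
    ‖evalL α β L z‖ ≤
      (L.map fun t => ‖t.c‖ * 2 ^ (t.p + t.q)).sum *
        ‖uab α β z‖ / (1 - ‖z‖ ^ 2) ^ n := by
  induction L with
  | nil => simp [evalL]
  | cons t L ih =>
    have hwt := hw t (List.mem_cons_self (a := t) (l := L))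
    have hwL : ∀ t' ∈ L, t'.p + t'.q + t'.r ≤ n := fun t' ht' =>
      hw t' (List.mem_cons_of_mem t ht')
    have hs0 : 0 < 1 - ‖z‖ ^ 2 := sPos hz
    have hterm : ‖t.c * uab α β z * mono t z‖ ≤
        ‖t.c‖ * 2 ^ (t.p + t.q) * ‖uab α β z‖ /
          (1 - ‖z‖ ^ 2) ^ n := by
      rw [norm_mul, norm_mul]
      have := mul_le_mul_of_nonneg_left (mono_bound t hz hwt)
        (mul_nonneg (norm_nonneg t.c) (norm_nonneg (uab α β z)))
      calc ‖t.c‖ * ‖uab α β z‖ * ‖mono t z‖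
          ≤ ‖t.c‖ * ‖uab α β z‖ *
            (2 ^ (t.p + t.q) / (1 - ‖z‖ ^ 2) ^ n) := this
        _ = ‖t.c‖ * 2 ^ (t.p + t.q) * ‖uab α β z‖ /
            (1 - ‖z‖ ^ 2) ^ n := by ring
    calc ‖evalL α β (t :: L) z‖
        ≤ ‖t.c * uab α β z * mono t z‖ + ‖evalL α β L z‖ := by
          simp only [evalL, List.map_cons, List.sum_cons]
          exact norm_add_le _ _
      _ ≤ ‖t.c‖ * 2 ^ (t.p + t.q) * ‖uab α β z‖ /
            (1 - ‖z‖ ^ 2) ^ n +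
          (L.map fun t => ‖t.c‖ * 2 ^ (t.p + t.q)).sum * ‖uab α β z‖ /
            (1 - ‖z‖ ^ 2) ^ n := add_le_add hterm (ih hwL)
      _ = ((t :: L).map fun t => ‖t.c‖ * 2 ^ (t.p + t.q)).sum *
            ‖uab α β z‖ / (1 - ‖z‖ ^ 2) ^ n := by
          simp only [List.map_cons, List.sum_cons]
          ring

end

end WAux

theorem stmt15 (α β : ℂ) (k l : ℕ) :
    ∃ C : ℝ, 0 < C ∧ ∀ z : ℂ, ‖z‖ < 1 →
      ‖wdz^[k] (wdzbar^[l] (uab α β)) z‖ ≤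
        C * ‖uab α β z‖ / (1 - ‖z‖ ^ 2) ^ (k + l) := by
  obtain ⟨L, hw, he⟩ := WAux.inv_iter α β k l
  refine ⟨(L.map fun t => ‖t.c‖ * 2 ^ (t.p + t.q)).sum + 1, ?_, ?_⟩
  · have h0 : 0 ≤ (L.map fun t => ‖t.c‖ * 2 ^ (t.p + t.q)).sum := by
      apply List.sum_nonneg
      intro x hx
      simp only [List.mem_map] at hx
      obtain ⟨t, _, rfl⟩ := hx
      positivity
    linarith
  · intro z hz
    rw [he z hz]
    refine (WAux.evalL_bound α β L hz hw).trans ?_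
    have hs0 : 0 < 1 - ‖z‖ ^ 2 := WAux.sPos hz
    gcongr <;> first
      | exact norm_nonneg _
      | linarith
end
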